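/- arXiv:1801.04803 — 4 statements merged into one kernel-verified Lean document; each statement's English description precedes it below -/
import Mathlib

section
/- Let q be a prime power and let v, d, k be integers with d even and 2 ≤ d/2 ≤ k ≤ v/2. Let M be a (v,d;k)_q lifted MRD code. Then every (k−d/2+1)-dimensional subspace of F_q^v all of whose nonzero vectors lie in Δ is contained in exactly one codeword of M. -/
open Module

/-- The subspace of `F_q^v` of vectors whose first `k` coordinates vanish
(denoted `Γ` in the paper); its complement (as a set of vectors) is `Δ`. -/
def Gamma (K : Type) [Field K] (k v : ℕ) : Submodule K (Fin v → K) where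
  carrier := {x | ∀ j : Fin v, (j : ℕ) < k → x j = 0}
  add_mem' := by
    intro a b ha hb j hj
    simp [ha j hj, hb j hj]
  zero_mem' := by
    intro j hj
    rfl
  smul_mem' := by
    intro c x hx j hj
    simp [hx j hj]

/-- The subspace distance `d_S(U,W) = dim(U+W) - dim(U ∩ W)`. -/
noncomputable def sDist {K : Type} [Field K] {v : ℕ}
    (U W : Submodule K (Fin v → K)) : ℕ :=
  finrank K ↥(U ⊔ W) - finrank K ↥(U ⊓ W)

/-- A constant dimension code of dimension `k` and minimum subspace distance `d`. -/
def IsCDC (K : Type) [Field K] (v : ℕ) (d k : ℤ)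
    (C : Set (Submodule K (Fin v → K))) : Prop :=
  (∀ U ∈ C, (finrank K U : ℤ) = k) ∧
  ∀ U ∈ C, ∀ W ∈ C, U ≠ W → d ≤ (sDist U W : ℤ)

/-- `A_q(v,d;k)`: the maximum cardinality of a `(v,M,d;k)_q` CDC. -/
noncomputable def Amax (K : Type) [Field K] (v : ℕ) (d k : ℤ) : ℕ :=
  sSup {n | ∃ C : Set (Submodule K (Fin v → K)), IsCDC K v d k C ∧ C.ncard = n}

/-- Row `i` of the `k × v` matrix `(I_k | A)`. -/
def liftRow {K : Type} [Field K] {k v : ℕ} (A : Matrix (Fin k) (Fin (v - k)) K)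
    (i : Fin k) : Fin v → K := fun j =>
  if (j : ℕ) < k then (if (i : ℕ) = (j : ℕ) then 1 else 0)
  else if h2 : (j : ℕ) - k < v - k then A i ⟨(j : ℕ) - k, h2⟩ else 0

/-- `M` is a `(v,d;k)_q` lifted MRD code: `M = { rowspan (I_k | A) : A ∈ R }`
for a `[k × (v-k), q^((v-k)(k-d/2+1)), d/2]_q` rank metric code `R`. -/
def IsLMRD (q : ℕ) (K : Type) [Field K] (v d k : ℕ)
    (M : Set (Submodule K (Fin v → K))) : Prop :=
  ∃ R : Set (Matrix (Fin k) (Fin (v - k)) K),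
    R.ncard = q ^ ((v - k) * (k - d / 2 + 1)) ∧
    (∀ A ∈ R, ∀ B ∈ R, A ≠ B → d / 2 ≤ (A - B).rank) ∧
    M = {U | ∃ A ∈ R, U = Submodule.span K (Set.range (liftRow A))}

/-- The Gaussian binomial coefficient `[a choose b]_q`, defined to be `0`
unless `0 ≤ b ≤ a`. -/
noncomputable def qBin (q : ℕ) (a b : ℤ) : ℚ :=
  if 0 ≤ b ∧ b ≤ a then
    ∏ i ∈ Finset.range b.toNat,
      ((q : ℚ) ^ a - (q : ℚ) ^ (i : ℤ)) / ((q : ℚ) ^ b - (q : ℚ) ^ (i : ℤ))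
  else 0

/-- `[[w, u; c]]_q = q^(u*c) * [w-u choose c]_q` for `0 ≤ c ≤ w-u`, else `0`. -/
noncomputable def qBinD (q : ℕ) (w u c : ℤ) : ℚ :=
  if 0 ≤ c ∧ c ≤ w - u then (q : ℚ) ^ (u * c) * qBin q (w - u) c else 0


open Matrix

section StmtZeroAux

variable {K : Type} [Field K] {v k : ℕ}

/-- Projection onto the first `k` coordinates. -/
def headMap (h : k ≤ v) : (Fin v → K) →ₗ[K] (Fin k → K) where
  toFun x i := x (Fin.castLE h i)
  map_add' _ _ := rfl
  map_smul' _ _ := rfl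

/-- Projection onto the last `v - k` coordinates. -/
def tailMap (h : k ≤ v) : (Fin v → K) →ₗ[K] (Fin (v - k) → K) where
  toFun x j := x ⟨k + j, by have := j.2; omega⟩
  map_add' _ _ := rfl
  map_smul' _ _ := rfl

/-- The linear map `c ↦ c · (I_k | A)`. -/
def phiMap (h : k ≤ v) (A : Matrix (Fin k) (Fin (v - k)) K) :
    (Fin k → K) →ₗ[K] (Fin v → K) where
  toFun c j := if hj : (j : ℕ) < k then c ⟨j, hj⟩
    else (c ᵥ* A) ⟨(j : ℕ) - k, by have := j.2; omega⟩
  map_add' a b := by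
    funext j
    by_cases hj : (j : ℕ) < k <;> simp [hj, Matrix.add_vecMul]
  map_smul' r a := by
    funext j
    by_cases hj : (j : ℕ) < k <;> simp [hj, Matrix.smul_vecMul]

lemma phiMap_eq_sum (h : k ≤ v) (A : Matrix (Fin k) (Fin (v - k)) K) (c : Fin k → K) :
    phiMap h A c = ∑ i, c i • liftRow A i := by
  funext j
  simp only [phiMap, LinearMap.coe_mk, AddHom.coe_mk, Finset.sum_apply, Pi.smul_apply,
    liftRow, smul_eq_mul]
  by_cases hj : (j : ℕ) < k
  · rw [dif_pos hj]
    have : ∀ i : Fin k, c i * (if (i : ℕ) = (j : ℕ) then (1 : K) else 0)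
        = if i = ⟨j, hj⟩ then c i else 0 := by
      intro i
      by_cases hi : i = ⟨j, hj⟩
      · subst hi; simp
      · rw [Fin.ext_iff] at hi
        simp only [hi, if_false, mul_zero]
        rw [if_neg (fun h => hi (by rw [h]))]
    simp only [hj, if_pos, this, Finset.sum_ite_eq', Finset.mem_univ, if_true]
  · have h2 : (j : ℕ) - k < v - k := by have := j.2; omega
    rw [dif_neg hj]
    simp only [hj, if_false, h2, dif_pos]
    simp [Matrix.vecMul, dotProduct]

lemma span_liftRow (h : k ≤ v) (A : Matrix (Fin k) (Fin (v - k)) K) :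
    Submodule.span K (Set.range (liftRow A)) = LinearMap.range (phiMap h A) := by
  classical
  apply le_antisymm
  · rw [Submodule.span_le]
    rintro _ ⟨i, rfl⟩
    refine ⟨Pi.single i 1, ?_⟩
    rw [phiMap_eq_sum]
    have : ∀ l : Fin k, (Pi.single i 1 : Fin k → K) l • liftRow A l
        = if l = i then liftRow A l else 0 := by
      intro l
      by_cases hl : l = i
      · subst hl; simp
      · simp [Pi.single_apply, hl]
    simp [this, Finset.sum_ite_eq]
  · rintro _ ⟨c, rfl⟩
    rw [phiMap_eq_sum]
    exact Submodule.sum_mem _ fun i _ =>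
      Submodule.smul_mem _ _ (Submodule.subset_span ⟨i, rfl⟩)

lemma head_phi (h : k ≤ v) (A : Matrix (Fin k) (Fin (v - k)) K) (c : Fin k → K) :
    headMap h (phiMap h A c) = c := by
  funext i
  simp only [headMap, phiMap, LinearMap.coe_mk, AddHom.coe_mk]
  have hi : ((Fin.castLE h i : Fin v) : ℕ) < k := i.2
  rw [dif_pos hi]
  exact congrArg c (Fin.ext rfl)

lemma tail_phi (h : k ≤ v) (A : Matrix (Fin k) (Fin (v - k)) K) (c : Fin k → K) :
    tailMap h (phiMap h A c) = c ᵥ* A := by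
  funext j
  simp only [tailMap, phiMap, LinearMap.coe_mk, AddHom.coe_mk]
  have hk : ¬ ((⟨k + (j : ℕ), by have := j.2; omega⟩ : Fin v) : ℕ) < k := by simp
  rw [dif_neg hk]
  congr 1
  ext
  simp

lemma mem_range_phi (h : k ≤ v) (A : Matrix (Fin k) (Fin (v - k)) K) (x : Fin v → K) :
    x ∈ LinearMap.range (phiMap h A) ↔ (headMap h x) ᵥ* A = tailMap h x := by
  constructor
  · rintro ⟨c, rfl⟩
    rw [head_phi, tail_phi]
  · intro hx
    refine ⟨headMap h x, ?_⟩
    funext j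
    by_cases hj : (j : ℕ) < k
    · simp only [phiMap, LinearMap.coe_mk, AddHom.coe_mk]
      rw [dif_pos hj]
      exact congrArg x (Fin.ext rfl)
    · have h2 : (j : ℕ) - k < v - k := by have := j.2; omega
      simp only [phiMap, LinearMap.coe_mk, AddHom.coe_mk]
      rw [dif_neg hj, hx]
      show x ⟨k + ((j : ℕ) - k), _⟩ = x j
      exact congrArg x (Fin.ext (by simp; omega))

lemma ker_bound [Fintype K] (C : Matrix (Fin k) (Fin (v - k)) K) (δ : ℕ) (hC : δ ≤ C.rank) :
    finrank K (LinearMap.ker C.vecMulLinear) + δ ≤ k := by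
  have h1 := LinearMap.finrank_range_add_finrank_ker C.vecMulLinear
  rw [Module.finrank_fin_fun] at h1
  have h2 : C.rank = finrank K (LinearMap.range C.vecMulLinear) := by
    rw [← Matrix.rank_transpose C]
    show finrank K (LinearMap.range (Cᵀ).mulVecLin) = _
    rw [Matrix.mulVecLin_transpose]
  omega

end StmtZeroAux

/-- every `(k-d/2+1)`-dimensional subspace of `F_q^v` all of whose
nonzero vectors lie in `Δ` is contained in exactly one codeword of an LMRD. -/
theorem stmt0 (q : ℕ) (K : Type) [Field K] [Fintype K] (hq : Fintype.card K = q)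
    (v d k : ℕ) (hd : Even d) (hd2 : 2 ≤ d / 2) (hdk : d / 2 ≤ k) (hkv : 2 * k ≤ v)
    (M : Set (Submodule K (Fin v → K))) (hM : IsLMRD q K v d k M)
    (W : Submodule K (Fin v → K)) (hWdim : finrank K W = k - d / 2 + 1)
    (hWdelta : ∀ x ∈ W, x ≠ 0 → x ∉ Gamma K k v) :
    ∃! U, U ∈ M ∧ W ≤ U := by
  classical
  obtain ⟨R, hRcard, hRdist, hMeq⟩ := hM
  have hkv' : k ≤ v := by omega
  have hRfin : R.Finite := Set.toFinite R
  haveI : Fintype R := hRfin.fintype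
  let b := Module.finBasis K W
  let e : W →ₗ[K] (Fin k → K) := (headMap hkv').comp W.subtype
  have he : Function.Injective e := by
    intro x y hxy
    by_contra hne
    have hsub : ((x : Fin v → K) - y) ∈ W := W.sub_mem x.2 y.2
    have hne' : (x : Fin v → K) - (y : Fin v → K) ≠ 0 := by
      intro h0
      exact hne (Subtype.ext (sub_eq_zero.mp h0))
    refine hWdelta _ hsub hne' ?_
    intro j hj
    have hcf := congrFun hxy ⟨(j : ℕ), hj⟩
    have hcast : Fin.castLE hkv' ⟨(j : ℕ), hj⟩ = j := Fin.ext rfl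
    simp only [e, LinearMap.comp_apply, headMap, LinearMap.coe_mk, AddHom.coe_mk,
      Submodule.coe_subtype, hcast] at hcf
    simp [hcf]
  have hre : finrank K (LinearMap.range e) = finrank K W :=
    LinearMap.finrank_range_of_inj he
  have key : ∀ C : Matrix (Fin k) (Fin (v - k)) K, d / 2 ≤ C.rank →
      ¬ (∀ t, (e (b t)) ᵥ* C = 0) := by
    intro C hC hall
    have hsub : LinearMap.range e ≤ LinearMap.ker C.vecMulLinear := by
      rw [LinearMap.range_eq_map, ← b.span_eq, Submodule.map_span, Submodule.span_le]
      rintro _ ⟨_, ⟨t, rfl⟩, rfl⟩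
      exact LinearMap.mem_ker.mpr (by simpa using hall t)
    have h1 : finrank K (LinearMap.range e) ≤ finrank K (LinearMap.ker C.vecMulLinear) :=
      Submodule.finrank_mono hsub
    have h2 := ker_bound C (d / 2) hC
    rw [hre, hWdim] at h1
    omega
  let F : R → (Fin (finrank K W) → (Fin (v - k) → K)) :=
    fun A t => (e (b t)) ᵥ* (A : Matrix (Fin k) (Fin (v - k)) K)
  have hFinj : Function.Injective F := by
    intro A B hAB
    by_contra hne
    have hne' : (A : Matrix (Fin k) (Fin (v - k)) K) ≠ B := fun h => hne (Subtype.ext h)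
    refine key _ (hRdist A A.2 B B.2 hne') ?_
    intro t
    have hABt := congrFun hAB t
    simp only [F] at hABt
    rw [Matrix.vecMul_sub, hABt, sub_self]
  have hcards : Fintype.card R = Fintype.card (Fin (finrank K W) → (Fin (v - k) → K)) := by
    have hR' : Fintype.card R = R.ncard := by
      rw [← Nat.card_coe_set_eq, Nat.card_eq_fintype_card]
    rw [hR', hRcard, Fintype.card_fun, Fintype.card_fun, hq, Fintype.card_fin,
      Fintype.card_fin, ← pow_mul, hWdim]
  have hFbij : Function.Bijective F :=
    (Fintype.bijective_iff_injective_and_card F).mpr ⟨hFinj, hcards⟩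
  obtain ⟨A, hA⟩ := hFbij.2 (fun t => tailMap hkv' ((b t : W) : Fin v → K))
  have hAall : ∀ x : W, (e x) ᵥ* (A : Matrix (Fin k) (Fin (v - k)) K)
      = tailMap hkv' (x : Fin v → K) := by
    have hmap : (Matrix.vecMulLinear (A : Matrix (Fin k) (Fin (v - k)) K)).comp e
        = (tailMap hkv').comp W.subtype := by
      apply b.ext
      intro t
      simpa using congrFun hA t
    intro x
    simpa using LinearMap.congr_fun hmap x
  refine ⟨Submodule.span K (Set.range (liftRow (A : Matrix (Fin k) (Fin (v - k)) K))),
    ⟨?_, ?_⟩, ?_⟩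
  · rw [hMeq]
    exact ⟨A, A.2, rfl⟩
  · intro x hx
    rw [span_liftRow hkv', mem_range_phi]
    exact hAall ⟨x, hx⟩
  · rintro U' ⟨hU'M, hWU'⟩
    rw [hMeq] at hU'M
    obtain ⟨B, hB, rfl⟩ := hU'M
    suffices hBA : B = (A : Matrix (Fin k) (Fin (v - k)) K) by rw [hBA]
    by_contra hne
    refine key _ (hRdist B hB A A.2 hne) ?_
    intro t
    have h1 : ((b t : W) : Fin v → K) ∈
        Submodule.span K (Set.range (liftRow B)) := hWU' (b t).2
    rw [span_liftRow hkv', mem_range_phi] at h1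
    have h2 := hAall (b t)
    rw [Matrix.vecMul_sub]
    have he1 : e (b t) ᵥ* B = tailMap hkv' ((b t : W) : Fin v → K) := h1
    rw [he1, h2, sub_self]
end

section
/- Let q be a prime power and let v, d, k be integers with d even and 2 ≤ d/2 ≤ k ≤ v/2. Let C be a (v,#C,d;k)_q constant dimension code that contains a (v,d;k)_q lifted MRD code M as a subset. Then every codeword U ∈ C \ M satisfies dim(U ∩ Γ) ≥ d/2. -/
open Module

open Matrix

lemma aux_rank_le {K : Type} [Field K] {m' k n : ℕ}
    (P : Matrix (Fin m') (Fin k) K) (N : Matrix (Fin k) (Fin n) K)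
    (hP : LinearIndependent K (fun i => P i)) (h : P * N = 0) :
    N.rank + m' ≤ k := by
  have h1 : N.rank = finrank K (LinearMap.range Nᵀ.mulVecLin) := by
    rw [← Matrix.rank_transpose]; rfl
  have hker : ∀ i, P i ∈ LinearMap.ker Nᵀ.mulVecLin := by
    intro i
    rw [LinearMap.mem_ker]
    show Nᵀ.mulVec (P i) = 0
    rw [Matrix.mulVec_transpose]
    funext j
    simpa [Matrix.vecMul, Matrix.mul_apply, dotProduct, mul_comm] using
      congrFun (congrFun h i) j
  have hspan : Submodule.span K (Set.range fun i => P i) ≤ LinearMap.ker Nᵀ.mulVecLin := by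
    rw [Submodule.span_le]; rintro _ ⟨i, rfl⟩; exact hker i
  have hm : finrank K (Submodule.span K (Set.range fun i => P i)) = m' := by
    rw [finrank_span_eq_card hP, Fintype.card_fin]
  have hle : m' ≤ finrank K (LinearMap.ker Nᵀ.mulVecLin) := by
    rw [← hm]; exact Submodule.finrank_mono hspan
  have := LinearMap.finrank_range_add_finrank_ker Nᵀ.mulVecLin
  rw [Module.finrank_pi] at this
  simp only [Fintype.card_fin] at this
  omega

/-- in a CDC containing an LMRD `M`, every codeword outside `M`
meets `Γ` in dimension at least `d/2`. -/
theorem stmt2 (q : ℕ) (K : Type) [Field K] [Fintype K] (hq : Fintype.card K = q)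
    (v d k : ℕ) (hd : Even d) (hd2 : 2 ≤ d / 2) (hdk : d / 2 ≤ k) (hkv : 2 * k ≤ v)
    (C M : Set (Submodule K (Fin v → K)))
    (hC : IsCDC K v (d : ℤ) (k : ℤ) C) (hM : IsLMRD q K v d k M) (hMC : M ⊆ C)
    (U : Submodule K (Fin v → K)) (hU : U ∈ C \ M) :
    d / 2 ≤ finrank K ↥(U ⊓ Gamma K k v) := by
  classical
  by_contra hcon
  push_neg at hcon
  obtain ⟨hCdim, hCdist⟩ := hC
  obtain ⟨R, hRcard, hRdist, hMdef⟩ := hM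
  obtain ⟨hUC, hUM⟩ := hU
  have hkv' : k ≤ v := by omega
  set δ := d / 2 with hδ
  set m := k - δ + 1 with hm
  -- projection to first k coordinates
  set π : (Fin v → K) →ₗ[K] (Fin k → K) := LinearMap.funLeft K K (Fin.castLE hkv') with hπ
  have hker : LinearMap.ker π = Gamma K k v := by
    ext x
    constructor
    · intro hx j hj
      have := congrFun (LinearMap.mem_ker.mp hx) ⟨(j : ℕ), hj⟩
      simpa [hπ, LinearMap.funLeft, Fin.castLE] using this
    · intro hx
      rw [LinearMap.mem_ker]
      funext j
      exact hx (Fin.castLE hkv' j) j.isLt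
  have hUdim : finrank K U = k := by
    have := hCdim U hUC; exact_mod_cast this
  -- dimension of the projection of U
  have hfd : ∀ (W : Submodule K (Fin v → K)), FiniteDimensional K W := fun W => inferInstance
  have hmap : m ≤ finrank K (U.map π) := by
    have hrn := LinearMap.finrank_range_add_finrank_ker (π.domRestrict U)
    rw [LinearMap.range_domRestrict, LinearMap.ker_domRestrict] at hrn
    have hco : Submodule.comap U.subtype (LinearMap.ker π)
        = Submodule.comap U.subtype (U ⊓ Gamma K k v) := by
      ext ⟨x, hx⟩
      simp [hker, hx]
    rw [hco] at hrn
    have he : finrank K ↥(Submodule.comap U.subtype (U ⊓ Gamma K k v))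
        = finrank K ↥(U ⊓ Gamma K k v) :=
      (Submodule.comapSubtypeEquivOfLe inf_le_left).finrank_eq
    rw [he, hUdim] at hrn
    omega
  obtain ⟨f, hf⟩ := exists_linearIndependent_of_le_finrank hmap
  have hpre : ∀ i : Fin m, ∃ x, x ∈ U ∧ π x = (f i : Fin k → K) := by
    intro i
    obtain ⟨x, hx, hxe⟩ := (f i).2
    exact ⟨x, hx, hxe⟩
  choose u hu hπu using hpre
  set p : Fin m → Fin k → K := fun i => π (u i) with hpdef
  have hp : LinearIndependent K p := by
    have hpe : p = (Submodule.map π U).subtype ∘ f := by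
      funext i; simp [hpdef, hπu i]
    rw [hpe]
    exact hf.map' _ (Submodule.ker_subtype _)
  set P : Matrix (Fin m) (Fin k) K := Matrix.of p with hPdef
  set Q : Matrix (Fin m) (Fin (v - k)) K :=
    Matrix.of (fun i (j : Fin (v - k)) => u i ⟨k + (j : ℕ), by omega⟩) with hQdef
  set Φ : Matrix (Fin k) (Fin (v - k)) K → Matrix (Fin m) (Fin (v - k)) K :=
    fun A => P * A with hΦdef
  have hinj : Set.InjOn Φ R := by
    intro A hA B hB hAB
    by_contra hne
    have hrk := hRdist A hA B hB hne
    have hz : P * (A - B) = 0 := by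
      rw [Matrix.mul_sub, show P * A = P * B from hAB, sub_self]
    have := aux_rank_le P (A - B) hp hz
    omega
  have himg : (Φ '' R).ncard = q ^ ((v - k) * m) := by
    rw [Set.ncard_image_of_injOn hinj, hRcard]
  have hcodcard : Nat.card (Matrix (Fin m) (Fin (v - k)) K) = q ^ ((v - k) * m) := by
    rw [Nat.card_eq_fintype_card]
    show Fintype.card (Fin m → Fin (v - k) → K) = _
    rw [Fintype.card_fun, Fintype.card_fun, hq, Fintype.card_fin, Fintype.card_fin, ← pow_mul]
  have huniv : Φ '' R = Set.univ := by
    refine Set.eq_of_subset_of_ncard_le (Set.subset_univ _) ?_ (Set.finite_univ (α := Matrix (Fin m) (Fin (v - k)) K))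
    rw [Set.ncard_univ, himg, hcodcard]
  have hQmem : Q ∈ Φ '' R := huniv ▸ Set.mem_univ Q
  obtain ⟨A, hA, hPA⟩ := hQmem
  set W := Submodule.span K (Set.range (liftRow A)) with hWdef
  have hWM : W ∈ M := by rw [hMdef]; exact ⟨A, hA, rfl⟩
  have hWC : W ∈ C := hMC hWM
  have hUW : U ≠ W := fun h => hUM (h ▸ hWM)
  have huW : ∀ i, u i ∈ W := by
    intro i
    have hrep : u i = ∑ j : Fin k, p i j • liftRow A j := by
      funext c
      rw [Finset.sum_apply]
      by_cases hc : (c : ℕ) < k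
      · have : ∀ j : Fin k, (p i j • liftRow A j) c
            = if j = ⟨(c : ℕ), hc⟩ then p i j else 0 := by
          intro j
          simp only [Pi.smul_apply, liftRow, hc, if_true, smul_eq_mul]
          by_cases hjc : j = ⟨(c : ℕ), hc⟩
          · subst hjc; simp
          · have : ¬ ((j : ℕ) = (c : ℕ)) := by
              intro h; exact hjc (Fin.ext h)
            simp [this, hjc]
        rw [Finset.sum_congr rfl (fun j _ => this j)]
        simp only [Finset.sum_ite_eq', Finset.mem_univ, if_true]
        show u i c = p i ⟨(c : ℕ), hc⟩
        have : Fin.castLE hkv' ⟨(c : ℕ), hc⟩ = c := Fin.ext rfl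
        simp [hpdef, hπ, LinearMap.funLeft, this]
      · have hck : k ≤ (c : ℕ) := Nat.le_of_not_lt hc
        have hlt : (c : ℕ) - k < v - k := by omega
        have : ∀ j : Fin k, (p i j • liftRow A j) c
            = p i j * A j ⟨(c : ℕ) - k, hlt⟩ := by
          intro j
          simp only [Pi.smul_apply, liftRow, hc, if_false, smul_eq_mul, dif_pos hlt]
        rw [Finset.sum_congr rfl (fun j _ => this j)]
        have hQ' := congrFun (congrFun hPA i) ⟨(c : ℕ) - k, hlt⟩
        have hcc : (⟨k + ((c : ℕ) - k), by omega⟩ : Fin v) = c := Fin.ext (by simp; omega)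
        simp only [hΦdef, hQdef, Matrix.mul_apply, Matrix.of_apply, hPdef] at hQ'
        exact (hcc ▸ hQ').symm
    rw [hrep]
    exact Submodule.sum_mem _ fun j _ =>
      Submodule.smul_mem _ _ (Submodule.subset_span ⟨j, rfl⟩)
  have hui : LinearIndependent K u := LinearIndependent.of_comp π hp
  have hsub : Submodule.span K (Set.range u) ≤ U ⊓ W := by
    rw [Submodule.span_le]; rintro _ ⟨i, rfl⟩; exact ⟨hu i, huW i⟩
  have hdimUW : m ≤ finrank K ↥(U ⊓ W) := by
    have h1 : finrank K ↥(Submodule.span K (Set.range u)) = m := by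
      rw [finrank_span_eq_card hui, Fintype.card_fin]
    rw [← h1]
    exact Submodule.finrank_mono hsub
  have hWdim : finrank K W = k := by
    have := hCdim W hWC; exact_mod_cast this
  have hsupinf := Submodule.finrank_sup_add_finrank_inf_eq U W
  rw [hUdim, hWdim] at hsupinf
  have hdist := hCdist U hUC W hWC hUW
  unfold sDist at hdist
  obtain ⟨r, hr⟩ := hd
  omega
end

section
/- Let c, k, t, t0, y be integers and q a prime power with y ≠ 0, c ≤ k − t, and t0 ≤ t. Then [[k, t0; c]]_q · [t0 choose y]_q ≤ [[k, t; c]]_q · [t choose y]_q. -/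
open Module

/-!
In the nondegenerate range both sides are products `∏_{i<m} (q^n - q^(s+i))` divided by the same
positive denominators, so it suffices that `t ↦ ∏_{i<c} (q^k - q^(t+i)) · ∏_{i<y} (q^t - q^i)` is
monotone for `y ≤ t ≤ k - c`. Passing from `t` to `t + 1` multiplies the first product by
`(q^k - q^(t+c)) / (q^k - q^t)`, while the second gains at least the factor
`(q^(t+1) - 1) / (q^t - 1)` of its `i = 0` term; since `q^(t+c+1) ≤ q^k`, the gain outweighs the loss.
-/

section QFallingProd

variable {R : Type*} [CommRing R] {q : R}

def qFallingProd (q : R) (n s m : ℕ) : R :=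
  ∏ i ∈ Finset.range m, (q ^ n - q ^ (s + i))

theorem qFallingProd_succ (n s m : ℕ) :
    qFallingProd q n s (m + 1) = qFallingProd q n s m * (q ^ n - q ^ (s + m)) :=
  Finset.prod_range_succ _ _

theorem pow_mul_qFallingProd_zero (n s m : ℕ) :
    q ^ (s * m) * qFallingProd q n 0 m = qFallingProd q (s + n) s m := by
  have hconst : q ^ (s * m) = ∏ _i ∈ Finset.range m, q ^ s := by
    rw [Finset.prod_const, Finset.card_range, pow_mul]
  rw [hconst, qFallingProd, qFallingProd, ← Finset.prod_mul_distrib]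
  exact Finset.prod_congr rfl fun i _ => by ring

theorem qFallingProd_succ' (n s m : ℕ) :
    qFallingProd q n s (m + 1) = (q ^ n - q ^ s) * qFallingProd q n (s + 1) m := by
  simp only [qFallingProd, Finset.prod_range_succ', add_zero, mul_comm (q ^ n - q ^ s)]
  congr 1
  exact Finset.prod_congr rfl fun i _ => by rw [add_right_comm, add_assoc]

variable [LinearOrder R] [IsStrictOrderedRing R]

theorem qFallingProd_pos (hq : 1 < q) {n s m : ℕ} (h : s + m ≤ n) :
    0 < qFallingProd q n s m :=
  Finset.prod_pos fun i hi =>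
    sub_pos.2 (pow_lt_pow_right₀ hq (by have := Finset.mem_range.1 hi; omega))

theorem qFallingProd_le_of_le (hq : 1 ≤ q) {n n' s m : ℕ} (h : s + m ≤ n) (hn : n ≤ n') :
    qFallingProd q n s m ≤ qFallingProd q n' s m :=
  Finset.prod_le_prod
    (fun i hi => sub_nonneg.2 (pow_le_pow_right₀ hq (by have := Finset.mem_range.1 hi; omega)))
    (fun _ _ => sub_le_sub_right (pow_le_pow_right₀ hq hn) _)

theorem sub_mul_sub_one_le_sub_mul_mul_sub_one (hq : 2 ≤ q) {x b Q : R} (hx : 1 ≤ x)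
    (hxb : x ≤ b) (hbQ : q * b ≤ Q) : (Q - x) * (x - 1) ≤ (Q - b) * (q * x - 1) := by
  nlinarith [mul_le_mul_of_nonneg_right hbQ (by linarith : (0 : R) ≤ x),
    mul_nonneg (mul_nonneg (sub_nonneg.2 hq) (by linarith : (0 : R) ≤ b)) (by linarith : (0 : R) ≤ x)]

theorem qFallingProd_mul_le_succ (hq : 2 ≤ q) {k c y t : ℕ} (hy : 1 ≤ y) (hyt : y ≤ t)
    (htc : t + 1 + c ≤ k) :
    qFallingProd q k t c * qFallingProd q t 0 y ≤
      qFallingProd q k (t + 1) c * qFallingProd q (t + 1) 0 y := by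
  have hq1 : 1 < q := by linarith
  obtain ⟨z, rfl⟩ : ∃ z, y = z + 1 := ⟨y - 1, by omega⟩
  -- the gain of the `i = 0` factor of the `y`-product against the loss of the `c`-product
  have hscalar : (q ^ k - q ^ t) * (q ^ t - 1) ≤ (q ^ k - q ^ (t + c)) * (q ^ (t + 1) - 1) := by
    rw [pow_succ']
    refine sub_mul_sub_one_le_sub_mul_mul_sub_one hq (one_le_pow₀ hq1.le)
      (pow_le_pow_right₀ hq1.le (by omega)) ?_
    rw [← pow_succ']
    exact pow_le_pow_right₀ hq1.le (by omega)
  have htail : qFallingProd q t 1 z ≤ qFallingProd q (t + 1) 1 z :=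
    qFallingProd_le_of_le hq1.le (by omega) (by omega)
  have hgap : 0 < q ^ k - q ^ (t + c) := sub_pos.2 (pow_lt_pow_right₀ hq1 (by omega))
  have hshift : qFallingProd q k t c * (q ^ k - q ^ (t + c)) =
      (q ^ k - q ^ t) * qFallingProd q k (t + 1) c := by
    rw [← qFallingProd_succ, qFallingProd_succ']
  rw [← mul_le_mul_iff_of_pos_right hgap]
  simp only [qFallingProd_succ' _ 0, pow_zero, zero_add]
  calc qFallingProd q k t c * ((q ^ t - 1) * qFallingProd q t 1 z) * (q ^ k - q ^ (t + c))
      = qFallingProd q k (t + 1) c * (((q ^ k - q ^ t) * (q ^ t - 1)) * qFallingProd q t 1 z) := by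
        linear_combination ((q ^ t - 1) * qFallingProd q t 1 z) * hshift
    _ ≤ qFallingProd q k (t + 1) c *
          (((q ^ k - q ^ (t + c)) * (q ^ (t + 1) - 1)) * qFallingProd q (t + 1) 1 z) := by
        refine mul_le_mul_of_nonneg_left (mul_le_mul hscalar htail
          (qFallingProd_pos hq1 (by omega)).le ?_) (qFallingProd_pos hq1 (by omega)).le
        exact mul_nonneg hgap.le (sub_nonneg.2 (one_le_pow₀ hq1.le))
    _ = _ := by ring

theorem qFallingProd_mul_mono (hq : 2 ≤ q) {k c y t₀ t : ℕ} (hy : 1 ≤ y) (hyt₀ : y ≤ t₀)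
    (ht : t₀ ≤ t) (htc : t + c ≤ k) :
    qFallingProd q k t₀ c * qFallingProd q t₀ 0 y ≤
      qFallingProd q k t c * qFallingProd q t 0 y := by
  induction t, ht using Nat.le_induction with
  | base => exact le_rfl
  | succ s hs ih =>
    exact (ih (by omega)).trans (qFallingProd_mul_le_succ hq hy (by omega) (by omega))

end QFallingProd

theorem qBin_natCast (q a b : ℕ) (h : b ≤ a) :
    qBin q a b = qFallingProd (q : ℚ) a 0 b / qFallingProd (q : ℚ) b 0 b := by
  rw [qBin, if_pos ⟨b.cast_nonneg, by exact_mod_cast h⟩, Int.toNat_natCast, qFallingProd,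
    qFallingProd, ← Finset.prod_div_distrib]
  simp only [zpow_natCast, zero_add]

theorem qBinD_natCast (q k t c : ℕ) (h : t + c ≤ k) :
    qBinD q k t c = qFallingProd (q : ℚ) k t c / qFallingProd (q : ℚ) c 0 c := by
  rw [qBinD, if_pos ⟨c.cast_nonneg, by omega⟩, show (k : ℤ) - t = ((k - t : ℕ) : ℤ) by omega,
    qBin_natCast q _ c (by omega), ← Nat.cast_mul, zpow_natCast, ← mul_div_assoc,
    pow_mul_qFallingProd_zero, Nat.add_sub_cancel' (by omega)]

theorem qBin_nonneg {q : ℕ} (hq : 0 < q) (a b : ℤ) : 0 ≤ qBin q a b := by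
  have hq1 : (1 : ℚ) ≤ q := Nat.one_le_cast.2 hq
  unfold qBin
  split_ifs with h
  · refine Finset.prod_nonneg fun i hi => div_nonneg ?_ ?_ <;>
      refine sub_nonneg.2 (zpow_le_zpow_right₀ hq1 ?_) <;>
      · have := Finset.mem_range.1 hi
        omega
  · exact le_rfl

theorem qBinD_nonneg {q : ℕ} (hq : 0 < q) (w u c : ℤ) : 0 ≤ qBinD q w u c := by
  unfold qBinD
  split_ifs
  · exact mul_nonneg (zpow_nonneg (Nat.cast_nonneg q) _) (qBin_nonneg hq _ _)
  · exact le_rfl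

/-- `[[k,t0;c]]_q [t0 choose y]_q ≤ [[k,t;c]]_q [t choose y]_q`
for integers with `y ≠ 0`, `c ≤ k - t` and `t0 ≤ t`. -/
theorem stmt6 (q : ℕ) (hq : IsPrimePow q) (c k t t0 y : ℤ)
    (hy : y ≠ 0) (hc : c ≤ k - t) (ht : t0 ≤ t) :
    qBinD q k t0 c * qBin q t0 y ≤ qBinD q k t c * qBin q t y := by
  have hq0 : 0 < q := hq.pos
  rcases lt_or_ge c 0 with hc0 | hc0
  · simp [qBinD, hc0.not_ge]
  by_cases hy0 : 0 ≤ y ∧ y ≤ t0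
  swap
  · rw [qBin, if_neg hy0, mul_zero]
    exact mul_nonneg (qBinD_nonneg hq0 _ _ _) (qBin_nonneg hq0 _ _)
  obtain ⟨hy0, hyt0⟩ := hy0
  lift c to ℕ using hc0
  lift y to ℕ using hy0
  lift t0 to ℕ using by omega
  lift t to ℕ using by omega
  lift k to ℕ using by omega
  rw [qBinD_natCast q k t0 c (by omega), qBinD_natCast q k t c (by omega),
    qBin_natCast q t0 y (by omega), qBin_natCast q t y (by omega),
    div_mul_div_comm, div_mul_div_comm]
  have hq1 : (1 : ℚ) < q := by exact_mod_cast hq.one_lt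
  refine div_le_div_of_nonneg_right ?_ (mul_pos (qFallingProd_pos hq1 (zero_add c).le)
    (qFallingProd_pos hq1 (zero_add y).le)).le
  exact qFallingProd_mul_mono (by exact_mod_cast hq.two_le) (by omega) (by omega) (by omega)
    (by omega)
end

section
/- Let q be a prime power and let v, d, k be integers with d even and 2 ≤ d/2 ≤ k ≤ v/2. Let C be a (v,#C,d;k)_q constant dimension code that contains a (v,d;k)_q lifted MRD code M; for d/2 ≤ t ≤ k set S_t = { U ∈ C : dim(U ∩ Γ) = t }, and for a subspace Y of Γ set N_{t,Y} = { U ∈ S_t : Y ⊆ U }. Let c and y be integers with 0 ≤ y ≤ k and k − d/2 + 1 ≤ c + y. Then for every y-dimensional subspace Y of Γ: Σ_{t=d/2}^{k−c} #N_{t,Y} · [[k, t; c]]_q ≤ [[v, v−k; c]]_q. -/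
/-!
Count `c`-tuples of vectors that are linearly independent modulo `Γ`. A `k`-space `U` with
`dim (U ∩ Γ) = t` contains `q^(tc) ∏_{i<c} (q^(k-t) - q^i) = [[k,t;c]]_q ∏_{i<c} (q^c - q^i)`
of them (an independent tuple in `U/(U ∩ Γ)` together with arbitrary lifts), and the whole
space contains `[[v,v-k;c]]_q ∏_{i<c} (q^c - q^i)`. If one tuple lies in two codewords
`U ≠ U'` containing `Y`, then `U ∩ U'` contains its span and `Y`, which meet trivially, so
`dim (U ∩ U') ≥ c + y ≥ k - d/2 + 1` and `d_S(U, U') < d`. Hence the tuple sets of the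
codewords counted on the left are pairwise disjoint, and comparing cardinalities gives the
bound.
-/

open Module

open LinearMap

theorem qBinD_mul_prod_pow_sub_pow {q : ℕ} (hq : 1 < q) {w u c : ℕ} (h : c + u ≤ w) :
    qBinD q w u c * ∏ i ∈ Finset.range c, ((q : ℚ) ^ c - (q : ℚ) ^ i) =
      (q : ℚ) ^ (u * c) * ∏ i ∈ Finset.range c, ((q : ℚ) ^ (w - u) - (q : ℚ) ^ i) := by
  have hcond : 0 ≤ (c : ℤ) ∧ (c : ℤ) ≤ w - u := by omega
  rw [qBinD, if_pos hcond, qBin, if_pos hcond, Int.toNat_natCast, mul_assoc,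
    ← Finset.prod_mul_distrib, show (w : ℤ) - u = (w - u : ℕ) by omega]
  simp only [zpow_natCast, ← Nat.cast_mul]
  refine congrArg _ (Finset.prod_congr rfl fun i hi => div_mul_cancel₀ _ ?_)
  have : (q : ℚ) ^ i < (q : ℚ) ^ c :=
    pow_lt_pow_right₀ (by exact_mod_cast hq) (by simpa using hi)
  exact sub_ne_zero.2 this.ne'

theorem natCast_prod_pow_sub_pow {q : ℕ} (hq : 1 ≤ q) {n c : ℕ} (h : c ≤ n) :
    ((∏ i ∈ Finset.range c, (q ^ n - q ^ i) : ℕ) : ℚ) =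
      ∏ i ∈ Finset.range c, ((q : ℚ) ^ n - (q : ℚ) ^ i) := by
  push_cast
  refine Finset.prod_congr rfl fun i hi => ?_
  rw [Nat.cast_sub (Nat.pow_le_pow_right hq (by simp at hi; omega))]
  push_cast
  rfl

section TupleCounting

variable {K : Type*} [Field K]

theorem card_linearIndependent_comp_of_surjective {E F : Type*} [AddCommGroup E] [Module K E]
    [AddCommGroup F] [Module K F] (φ : E →ₗ[K] F) (hφ : Function.Surjective φ) (c : ℕ) :
    Nat.card {f : Fin c → E // LinearIndependent K (φ ∘ f)} =
      Nat.card {g : Fin c → F // LinearIndependent K g} * Nat.card (ker φ) ^ c := by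
  obtain ⟨W, hW⟩ := (ker φ).exists_isCompl
  have hbij : Function.Bijective (φ.prod ((ker φ).projectionOnto W hW)) :=
    (equivProdOfSurjectiveOfIsCompl _ _ (range_eq_top.2 hφ) (Submodule.range_projectionOnto ..)
      (by rwa [Submodule.ker_projectionOnto])).bijective
  let T : (Fin c → E) ≃ (Fin c → F) × (Fin c → ker φ) :=
    (Equiv.arrowCongr (Equiv.refl _) (Equiv.ofBijective _ hbij)).trans
      (Equiv.arrowProdEquivProdArrow _ _ _)
  have hT : ∀ f, (T f).1 = φ ∘ f := fun _ => rfl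
  have e : {f : Fin c → E // LinearIndependent K (φ ∘ f)} ≃
      {g : Fin c → F // LinearIndependent K g} × (Fin c → ker φ) :=
    (T.subtypeEquiv (q := fun p => LinearIndependent K p.1) fun f => by rw [hT]).trans
      (Equiv.prodSubtypeFstEquivSubtypeProd (p := fun g : Fin c → F => LinearIndependent K g))
  rw [Nat.card_congr e, Nat.card_prod, Nat.card_fun, Nat.card_fin]

variable {V : Type*} [AddCommGroup V] [Module K V]

theorem finrank_ker_mkQ_comp_subtype (G W : Submodule K V) :
    finrank K (ker (G.mkQ ∘ₗ W.subtype)) = finrank K ↥(W ⊓ G) := by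
  rw [ker_comp, Submodule.ker_mkQ, ← Submodule.map_comap_subtype,
    Submodule.finrank_map_subtype_eq]

theorem finrank_range_mkQ_comp_subtype_add_finrank_inf [FiniteDimensional K V]
    (G W : Submodule K V) :
    finrank K (range (G.mkQ ∘ₗ W.subtype)) + finrank K ↥(W ⊓ G) = finrank K W := by
  rw [← finrank_ker_mkQ_comp_subtype]
  exact finrank_range_add_finrank_ker _

def tuplesIndepMod (G W : Submodule K V) (c : ℕ) : Set (Fin c → V) :=
  {f | (∀ i, f i ∈ W) ∧ LinearIndependent K (G.mkQ ∘ f)}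

theorem tuplesIndepMod_mono (G : Submodule K V) {W W' : Submodule K V} (h : W ≤ W') (c : ℕ) :
    tuplesIndepMod G W c ⊆ tuplesIndepMod G W' c :=
  fun _ hf => ⟨fun i => h (hf.1 i), hf.2⟩

theorem tuplesIndepMod_inf (G W W' : Submodule K V) (c : ℕ) :
    tuplesIndepMod G (W ⊓ W') c = tuplesIndepMod G W c ∩ tuplesIndepMod G W' c := by
  ext f
  simp only [tuplesIndepMod, Submodule.mem_inf, forall_and, Set.mem_ofPred_eq, Set.mem_inter_iff]
  tauto

theorem add_finrank_le_of_mem_tuplesIndepMod [FiniteDimensional K V] {G W Y : Submodule K V}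
    {c : ℕ} {f : Fin c → V} (hf : f ∈ tuplesIndepMod G W c) (hY : Y ≤ W ⊓ G) :
    c + finrank K Y ≤ finrank K W := by
  rw [← finrank_range_mkQ_comp_subtype_add_finrank_inf G W]
  let f' : Fin c → range (G.mkQ ∘ₗ W.subtype) :=
    fun i => ⟨G.mkQ (f i), ⟨f i, hf.1 i⟩, rfl⟩
  have hf' : LinearIndependent K f' := hf.2.of_comp (range _).subtype
  gcongr
  · simpa using hf'.fintype_card_le_finrank
  · exact Submodule.finrank_mono hY

theorem ncard_tuplesIndepMod [Fintype K] [FiniteDimensional K V] (G W : Submodule K V) {c : ℕ}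
    (hc : c + finrank K ↥(W ⊓ G) ≤ finrank K W) :
    (tuplesIndepMod G W c).ncard =
      (∏ i ∈ Finset.range c,
        (Fintype.card K ^ (finrank K W - finrank K ↥(W ⊓ G)) - Fintype.card K ^ i)) *
        Fintype.card K ^ (finrank K ↥(W ⊓ G) * c) := by
  have hrange := finrank_range_mkQ_comp_subtype_add_finrank_inf G W
  set g := G.mkQ ∘ₗ W.subtype
  let e : tuplesIndepMod G W c ≃
      {f : Fin c → W // LinearIndependent K (g.rangeRestrict ∘ f)} :=
    { toFun f := ⟨fun i => ⟨f.1 i, f.2.1 i⟩, f.2.2.of_comp (range g).subtype⟩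
      invFun f := ⟨fun i => f.1 i, fun i => (f.1 i).2, f.2.map' _ (Submodule.ker_subtype _)⟩
      left_inv _ := rfl
      right_inv _ := rfl }
  have := Module.finite_of_finite K (M := range g)
  rw [← Nat.card_coe_set_eq, Nat.card_congr e,
    card_linearIndependent_comp_of_surjective _ g.surjective_rangeRestrict, ker_rangeRestrict,
    card_linearIndependent (by omega), Module.natCard_eq_pow_finrank (K := K),
    finrank_ker_mkQ_comp_subtype, ← Fin.prod_univ_eq_prod_range, pow_mul,
    Nat.card_eq_fintype_card,
    show finrank K (range g) = finrank K W - finrank K ↥(W ⊓ G) by omega]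

theorem ncard_tuplesIndepMod_eq_qBinD [Fintype K] [FiniteDimensional K V]
    (G W : Submodule K V) {c : ℕ}
    (hc : c + finrank K ↥(W ⊓ G) ≤ finrank K W) :
    ((tuplesIndepMod G W c).ncard : ℚ) =
      qBinD (Fintype.card K) (finrank K W) (finrank K ↥(W ⊓ G)) c *
        ∏ i ∈ Finset.range c, ((Fintype.card K : ℚ) ^ c - (Fintype.card K : ℚ) ^ i) := by
  rw [qBinD_mul_prod_pow_sub_pow Fintype.one_lt_card hc, ncard_tuplesIndepMod G W hc, Nat.cast_mul,
    natCast_prod_pow_sub_pow Fintype.card_pos (by omega)]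
  push_cast
  ring

theorem exists_sum_ncard_tuplesIndepMod_eq [Fintype K] [Finite V] {k : ℕ}
    {C : Set (Submodule K V)} (hC : ∀ U ∈ C, finrank K U = k)
    (G Y : Submodule K V) (c : ℕ) (I : Finset ℤ) (hI : ∀ t ∈ I, t ≤ k - c) :
    ∃ s : Finset (Submodule K V), (∀ U ∈ s, U ∈ C ∧ Y ≤ U) ∧
      (∑ t ∈ I, (({U ∈ C | (finrank K ↥(U ⊓ G) : ℤ) = t ∧ Y ≤ U}).ncard : ℚ)
          * qBinD (Fintype.card K) k t c) *
        ∏ i ∈ Finset.range c, ((Fintype.card K : ℚ) ^ c - (Fintype.card K : ℚ) ^ i) =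
      ∑ U ∈ s, ((tuplesIndepMod G U c).ncard : ℚ) := by
  classical
  set N : ℤ → Finset (Submodule K V) := fun t =>
    (Set.toFinite {U ∈ C | (finrank K ↥(U ⊓ G) : ℤ) = t ∧ Y ≤ U}).toFinset
  have hN : ∀ t U, U ∈ N t ↔ U ∈ C ∧ (finrank K ↥(U ⊓ G) : ℤ) = t ∧ Y ≤ U :=
    fun _ _ => Set.Finite.mem_toFinset _
  refine ⟨I.biUnion N, fun U hU => ?_, ?_⟩
  · obtain ⟨t, -, hU⟩ := Finset.mem_biUnion.1 hU
    exact ⟨((hN t U).1 hU).1, ((hN t U).1 hU).2.2⟩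
  rw [Finset.sum_biUnion fun t _ t' _ hne => Finset.disjoint_left.2 fun U hU hU' =>
    hne (((hN t U).1 hU).2.1.symm.trans ((hN t' U).1 hU').2.1), Finset.sum_mul]
  refine Finset.sum_congr rfl fun t ht => ?_
  rw [Set.ncard_eq_toFinset_card _ (Set.toFinite _), mul_assoc, ← nsmul_eq_mul,
    ← Finset.sum_const]
  refine Finset.sum_congr rfl fun U hU => ?_
  obtain ⟨hUC, hUt, -⟩ := (hN t U).1 hU
  have htk := hI t ht
  rw [ncard_tuplesIndepMod_eq_qBinD G U (by rw [hC U hUC]; omega), hC U hUC, hUt]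

end TupleCounting

theorem Gamma_eq_ker_funLeft (K : Type) [Field K] {k v : ℕ} (hkv : k ≤ v) :
    Gamma K k v = ker (funLeft K K (Fin.castLE hkv)) := by
  ext x
  simp only [mem_ker, funext_iff, funLeft_apply, Pi.zero_apply, Fin.forall_iff]
  exact ⟨fun hx j hj => hx ⟨j, by omega⟩ hj, fun hx j hj => hx j hj⟩

theorem finrank_Gamma (K : Type) [Field K] {k v : ℕ} (hkv : k ≤ v) :
    finrank K (Gamma K k v) = v - k := by
  have h := finrank_range_add_finrank_ker (funLeft K K (Fin.castLE hkv))
  rw [range_eq_top.2 (funLeft_surjective_of_injective _ _ _ (Fin.castLE_injective hkv)),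
    finrank_top, ← Gamma_eq_ker_funLeft] at h
  simp only [finrank_fin_fun] at h
  omega

theorem IsCDC.two_mul_finrank_inf_add_le {K : Type} [Field K] {v : ℕ} {d k : ℤ}
    {C : Set (Submodule K (Fin v → K))} (hC : IsCDC K v d k C) {U W : Submodule K (Fin v → K)}
    (hU : U ∈ C) (hW : W ∈ C) (hne : U ≠ W) :
    2 * (finrank K ↥(U ⊓ W) : ℤ) + d ≤ 2 * k := by
  have hdist := hC.2 U hU W hW hne
  have hsum := Submodule.finrank_sup_add_finrank_inf_eq U W
  have hle := Submodule.finrank_mono (inf_le_left.trans le_sup_left : U ⊓ W ≤ U ⊔ W)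
  have := hC.1 U hU
  have := hC.1 W hW
  unfold sDist at hdist
  omega

theorem sum_ncard_tuplesIndepMod_le {K : Type} [Field K] [Fintype K] {v : ℕ} {d k : ℤ}
    {C : Set (Submodule K (Fin v → K))} (hC : IsCDC K v d k C)
    {G Y : Submodule K (Fin v → K)} (hY : Y ≤ G) {c : ℕ}
    (hcy : k - d / 2 + 1 ≤ c + (finrank K Y : ℤ)) (s : Finset (Submodule K (Fin v → K)))
    (hs : ∀ U ∈ s, U ∈ C ∧ Y ≤ U) :
    ∑ U ∈ s, (tuplesIndepMod G U c).ncard ≤ (tuplesIndepMod G ⊤ c).ncard := by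
  have hdisj : (s : Set (Submodule K (Fin v → K))).PairwiseDisjoint (tuplesIndepMod G · c) := by
    intro U hU U' hU' hne
    rw [Function.onFun, Set.disjoint_iff_inter_eq_empty, ← tuplesIndepMod_inf,
      Set.eq_empty_iff_forall_notMem]
    intro f hf
    have hdim := add_finrank_le_of_mem_tuplesIndepMod hf
      (le_inf (le_inf (hs U hU).2 (hs U' hU').2) hY)
    have hcode := hC.two_mul_finrank_inf_add_le (hs U hU).1 (hs U' hU').1 hne
    omega
  rw [← finsum_mem_coe_finset, ← s.finite_toSet.ncard_biUnion (fun _ _ => Set.toFinite _) hdisj]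
  exact Set.ncard_le_ncard (Set.iUnion₂_subset fun U _ => tuplesIndepMod_mono G le_top c)

theorem ncard_tuplesIndepMod_Gamma_top (K : Type) [Field K] [Fintype K] {k v c : ℕ}
    (hck : c ≤ k) (hkv : k ≤ v) :
    ((tuplesIndepMod (Gamma K k v) ⊤ c).ncard : ℚ) =
      qBinD (Fintype.card K) v (v - k) c *
        ∏ i ∈ Finset.range c, ((Fintype.card K : ℚ) ^ c - (Fintype.card K : ℚ) ^ i) := by
  have hΓ : finrank K ↥(⊤ ⊓ Gamma K k v) = v - k := by rw [top_inf_eq, finrank_Gamma K hkv]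
  rw [ncard_tuplesIndepMod_eq_qBinD _ ⊤ (by rw [hΓ, finrank_top, finrank_fin_fun]; omega),
    hΓ, finrank_top, finrank_fin_fun, Nat.cast_sub hkv]

theorem stmt8_general (q : ℕ) (K : Type) [Field K] [Fintype K] (hq : Fintype.card K = q)
    (v d k : ℕ) (hkv : 2 * k ≤ v)
    (C : Set (Submodule K (Fin v → K)))
    (hC : IsCDC K v (d : ℤ) (k : ℤ) C)
    (c y : ℤ) (hcy : (k : ℤ) - (d : ℤ) / 2 + 1 ≤ c + y)
    (Y : Submodule K (Fin v → K)) (hY : Y ≤ Gamma K k v) (hYdim : (finrank K Y : ℤ) = y) :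
    ∑ t ∈ Finset.Icc ((d : ℤ) / 2) ((k : ℤ) - c),
        (({U ∈ C | (finrank K ↥(U ⊓ Gamma K k v) : ℤ) = t ∧ Y ≤ U}).ncard : ℚ)
          * qBinD q (k : ℤ) t c
      ≤ qBinD q (v : ℤ) ((v : ℤ) - (k : ℤ)) c := by
  subst hq
  by_cases hc : 0 ≤ c ∧ c ≤ k
  swap
  · rw [Finset.sum_eq_zero fun t ht => ?_, qBinD, if_neg (by omega)]
    rw [Finset.mem_Icc] at ht
    rw [qBinD, if_neg (by omega), mul_zero]
  lift c to ℕ using hc.1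
  have hD :
      0 < ∏ i ∈ Finset.range c, ((Fintype.card K : ℚ) ^ c - (Fintype.card K : ℚ) ^ i) :=
    Finset.prod_pos fun i hi => sub_pos.2
      (pow_lt_pow_right₀ (by exact_mod_cast Fintype.one_lt_card) (by simpa using hi))
  obtain ⟨s, hs, hsum⟩ :=
    exists_sum_ncard_tuplesIndepMod_eq (fun U hU => by exact_mod_cast hC.1 U hU)
      (Gamma K k v) Y c _ fun t ht => (Finset.mem_Icc.1 ht).2
  refine le_of_mul_le_mul_right ?_ hD
  rw [hsum, ← ncard_tuplesIndepMod_Gamma_top K (by omega) (by omega), ← Nat.cast_sum,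
    Nat.cast_le]
  exact sum_ncard_tuplesIndepMod_le hC hY (hYdim ▸ hcy) s hs

/-- for every `y`-dimensional subspace `Y` of `Γ`,
`Σ_{t=d/2}^{k-c} #N_{t,Y} [[k,t;c]]_q ≤ [[v,v-k;c]]_q`. -/
theorem stmt8 (q : ℕ) (K : Type) [Field K] [Fintype K] (hq : Fintype.card K = q)
    (v d k : ℕ) (hd : Even d) (hd2 : 2 ≤ d / 2) (hdk : d / 2 ≤ k) (hkv : 2 * k ≤ v)
    (C M : Set (Submodule K (Fin v → K)))
    (hC : IsCDC K v (d : ℤ) (k : ℤ) C) (hM : IsLMRD q K v d k M) (hMC : M ⊆ C)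
    (c y : ℤ) (hy0 : 0 ≤ y) (hyk : y ≤ (k : ℤ)) (hcy : (k : ℤ) - (d : ℤ) / 2 + 1 ≤ c + y)
    (Y : Submodule K (Fin v → K)) (hY : Y ≤ Gamma K k v) (hYdim : (finrank K Y : ℤ) = y) :
    ∑ t ∈ Finset.Icc ((d : ℤ) / 2) ((k : ℤ) - c),
        (({U ∈ C | (finrank K ↥(U ⊓ Gamma K k v) : ℤ) = t ∧ Y ≤ U}).ncard : ℚ)
          * qBinD q (k : ℤ) t c
      ≤ qBinD q (v : ℤ) ((v : ℤ) - (k : ℤ)) c :=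
  stmt8_general q K hq v d k hkv C hC c y hcy Y hY hYdim
end
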